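/- arXiv:math/0601507 — 2 statements merged into one kernel-verified Lean document; each statement's English description precedes it below -/
import Mathlib

section
/- Let F be a field, G a group, and B a G-regular F-algebra (B a nonzero integral domain with G acting by F-algebra automorphisms, (Frac B)^G = B^G, and every nonzero b ∈ B whose F-span is G-stable is a unit of B); write E = B^G for its fixed field. Let V be a finite-dimensional F-vector space equipped with an F-linear action of G, and let G act on B ⊗_F V diagonally (g·(b⊗v) = (g·b)⊗(g·v)). Then D_B(V) := (B ⊗_F V)^G is an E-vector space of dimension at most dim_F V. -/
/-! A `G`-fixed family in `B ⊗[F] V` that is linearly independent over `E = B^G` is linearly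
independent over `B`: in a shortest `B`-relation `∑ fᵢ • vᵢ = 0` with `fⱼ ≠ 0`, the relation
`∑ (g fⱼ * fᵢ - fⱼ * g fᵢ) • vᵢ = 0` has vanishing `j`-th coefficient, so by minimality every
ratio `fᵢ / fⱼ` is `G`-invariant, hence lies in `E`, and dividing by `fⱼ` gives an `E`-relation.
Thus `dim_E D_B(V) ≤ rank_B (B ⊗[F] V) = dim_F V`. -/

open TensorProduct

universe u

/-- The subring of elements of `B` fixed by every element of `G`,
where `G` acts on the `F`-algebra `B` through `F`-algebra automorphisms. -/
def fixedSubring {F B G : Type*} [Field F] [CommRing B] [Algebra F B] [Group G]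
    (ρ : G →* (B ≃ₐ[F] B)) : Subring B where
  carrier := {b : B | ∀ g : G, ρ g b = b}
  mul_mem' := fun ha hb g => by rw [map_mul, ha g, hb g]
  one_mem' := fun g => map_one (ρ g)
  add_mem' := fun ha hb g => by rw [map_add, ha g, hb g]
  zero_mem' := fun g => map_zero (ρ g)
  neg_mem' := fun ha g => by rw [map_neg, ha g]

/-- The diagonal action of `g : G` on `B ⊗[F] V`, namely `g • (b ⊗ v) = (g • b) ⊗ (g • v)`. -/
noncomputable def diagAction {F B G V : Type*} [Field F] [CommRing B] [Algebra F B] [Group G]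
    [AddCommGroup V] [Module F V]
    (ρ : G →* (B ≃ₐ[F] B)) (σ : Representation F G V) (g : G) :
    B ⊗[F] V →ₗ[F] B ⊗[F] V :=
  TensorProduct.map ((ρ g).toLinearMap) (σ g)

/-- The diagonal action of `g` is semilinear over the action of `g` on `B`. -/
theorem diagAction_smul {F B G V : Type*} [Field F] [CommRing B] [Algebra F B] [Group G]
    [AddCommGroup V] [Module F V]
    (ρ : G →* (B ≃ₐ[F] B)) (σ : Representation F G V) (g : G) (b : B) (x : B ⊗[F] V) :
    diagAction ρ σ g (b • x) = (ρ g b) • diagAction ρ σ g x := by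
  induction x using TensorProduct.induction_on with
  | zero => simp
  | tmul b' v =>
      simp [diagAction, TensorProduct.smul_tmul', smul_eq_mul, map_mul]
  | add x y hx hy => simp [smul_add, hx, hy]

/-- The period space `D_B(V) = (B ⊗_F V)^G`, as a module over the fixed field
`E = B^G`.  Here `B ⊗[F] V` is a `B`-module through the left factor, and `E` acts
through the inclusion `E ⊆ B`. -/
noncomputable def periodSpace {F B G V : Type*} [Field F] [CommRing B] [Algebra F B] [Group G]
    [AddCommGroup V] [Module F V]
    (ρ : G →* (B ≃ₐ[F] B)) (σ : Representation F G V) :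
    Submodule (fixedSubring ρ) (B ⊗[F] V) where
  carrier := {x : B ⊗[F] V | ∀ g : G, diagAction ρ σ g x = x}
  add_mem' := fun hx hy g => by rw [map_add, hx g, hy g]
  zero_mem' := fun g => map_zero _
  smul_mem' := fun c x hx g => by
    have : (c : B) • x ∈ {x : B ⊗[F] V | ∀ g : G, diagAction ρ σ g x = x} := by
      intro g'
      rw [diagAction_smul, hx g', c.2 g']
    exact this g

section SemilinearAction

variable {F B G M ι : Type*} [Field F] [CommRing B] [Algebra F B] [Group G]
  [AddCommGroup M] [Module B M] {ρ : G →* (B ≃ₐ[F] B)} {τ : G → M →+ M} {v : ι → M}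

theorem sum_smul_map_eq_zero (hτ : ∀ g b x, τ g (b • x) = ρ g b • τ g x)
    (hv : ∀ i g, τ g (v i) = v i) {s : Finset ι} {f : ι → B}
    (hf : ∑ i ∈ s, f i • v i = 0) (g : G) : ∑ i ∈ s, ρ g (f i) • v i = 0 := by
  simpa only [map_sum, hτ, hv, map_zero] using congrArg (τ g) hf

theorem sum_smul_twist_eq_zero (hτ : ∀ g b x, τ g (b • x) = ρ g b • τ g x)
    (hv : ∀ i g, τ g (v i) = v i) {s : Finset ι} {f : ι → B}
    (hf : ∑ i ∈ s, f i • v i = 0) (g : G) (j : ι) :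
    ∑ i ∈ s, (ρ g (f j) * f i - f j * ρ g (f i)) • v i = 0 := by
  calc ∑ i ∈ s, (ρ g (f j) * f i - f j * ρ g (f i)) • v i
      = ρ g (f j) • ∑ i ∈ s, f i • v i - f j • ∑ i ∈ s, ρ g (f i) • v i := by
        simp only [Finset.smul_sum, smul_smul, sub_smul, Finset.sum_sub_distrib]
    _ = 0 := by rw [hf, sum_smul_map_eq_zero hτ hv hf g, smul_zero, smul_zero, sub_zero]

theorem exists_fixed_mul_of_sum_smul_eq_zero [DecidableEq ι]
    (hτ : ∀ g b x, τ g (b • x) = ρ g b • τ g x) (hv : ∀ i g, τ g (v i) = v i)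
    (hfrac : ∀ a b : B, b ≠ 0 → (∀ g : G, ρ g a * b = ρ g b * a) →
      ∃ c : B, (∀ g : G, ρ g c = c) ∧ a = c * b)
    {s : Finset ι} {j : ι} (hj : j ∈ s)
    (hmin : ∀ f' : ι → B, ∑ i ∈ s.erase j, f' i • v i = 0 → ∀ i ∈ s.erase j, f' i = 0)
    {f : ι → B} (hf : ∑ i ∈ s, f i • v i = 0) (hfj : f j ≠ 0) :
    ∀ i ∈ s, ∃ c : fixedSubring ρ, f i = c * f j := by
  intro i hi
  have hcomm : ∀ g : G, ρ g (f i) * f j = ρ g (f j) * f i := by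
    intro g
    obtain rfl | hij := eq_or_ne i j
    · rfl
    have htwist := sum_smul_twist_eq_zero hτ hv hf g j
    rw [← Finset.sum_erase _ (by rw [mul_comm (f j), sub_self, zero_smul])] at htwist
    rw [mul_comm, eq_comm, ← sub_eq_zero]
    exact hmin _ htwist i (Finset.mem_erase.mpr ⟨hij, hi⟩)
  obtain ⟨c, hc, hfc⟩ := hfrac (f i) (f j) hfj hcomm
  exact ⟨⟨c, hc⟩, hfc⟩

variable [IsDomain B] [Module.IsTorsionFree B M]

theorem linearIndependent_of_linearIndependent_fixedSubring
    (hτ : ∀ g b x, τ g (b • x) = ρ g b • τ g x) (hv : ∀ i g, τ g (v i) = v i)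
    (hfrac : ∀ a b : B, b ≠ 0 → (∀ g : G, ρ g a * b = ρ g b * a) →
      ∃ c : B, (∀ g : G, ρ g c = c) ∧ a = c * b)
    (hli : LinearIndependent (fixedSubring ρ) v) : LinearIndependent B v := by
  classical
  rw [linearIndependent_iff']
  intro s
  induction s using Finset.strongInduction with
  | H s ih =>
    intro f hf j hj
    by_contra hfj
    choose! c hc using exists_fixed_mul_of_sum_smul_eq_zero hτ hv hfrac hj
      (ih _ (Finset.erase_ssubset hj)) hf hfj
    have hrel : ∑ i ∈ s, c i • v i = 0 := by
      refine (smul_eq_zero.mp ?_).resolve_left hfj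
      rw [← hf, Finset.smul_sum]
      refine Finset.sum_congr rfl fun i hi => ?_
      rw [hc i hi, Subring.smul_def, smul_smul, mul_comm]
    have hcj := linearIndependent_iff'.mp hli s c hrel j hj
    exact hfj (by rw [hc j hj, hcj, ZeroMemClass.coe_zero, zero_mul])

theorem rank_fixedSubring_le_of_forall_map_eq_self (hτ : ∀ g b x, τ g (b • x) = ρ g b • τ g x)
    (hfrac : ∀ a b : B, b ≠ 0 → (∀ g : G, ρ g a * b = ρ g b * a) →
      ∃ c : B, (∀ g : G, ρ g c = c) ∧ a = c * b)
    (N : Submodule (fixedSubring ρ) M) (hN : ∀ x ∈ N, ∀ g, τ g x = x) :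
    Module.rank (fixedSubring ρ) N ≤ Module.rank B M := by
  rw [Module.rank_def]
  refine ciSup_le' fun ⟨s, hs⟩ => ?_
  refine LinearIndependent.cardinal_le_rank (v := fun x : s => (x : M)) ?_
  exact linearIndependent_of_linearIndependent_fixedSubring hτ (fun x g => hN _ x.1.2 g) hfrac
    (hs.map' N.subtype N.ker_subtype)

end SemilinearAction

theorem rank_periodSpace_le_general
    {F B G V : Type u} [Field F] [CommRing B] [IsDomain B] [Algebra F B] [Group G]
    [AddCommGroup V] [Module F V]
    (ρ : G →* (B ≃ₐ[F] B)) (σ : Representation F G V)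
    (hfrac : ∀ a b : B, b ≠ 0 → (∀ g : G, ρ g a * b = ρ g b * a) →
      ∃ c : B, (∀ g : G, ρ g c = c) ∧ a = c * b) :
    Module.rank (fixedSubring ρ) (periodSpace ρ σ) ≤ Module.rank F V :=
  calc Module.rank (fixedSubring ρ) (periodSpace ρ σ)
      ≤ Module.rank B (B ⊗[F] V) :=
        rank_fixedSubring_le_of_forall_map_eq_self
          (τ := fun g => (diagAction ρ σ g).toAddMonoidHom) (diagAction_smul ρ σ) hfrac _
          fun _ hx g => hx g
    _ = Module.rank F V := by rw [Module.rank_baseChange, Cardinal.lift_id]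

/-- Let `B` be a `G`-regular `F`-algebra (an integral domain on which `G` acts by `F`-algebra
automorphisms, such that `(Frac B)^G = B^G` and every nonzero `b ∈ B` whose `F`-span is
`G`-stable is a unit), with fixed field `E = B^G`.  For any finite-dimensional `F`-linear
representation `V` of `G`, the period space `D_B(V) = (B ⊗_F V)^G` (for the diagonal
`G`-action) is an `E`-vector space of dimension at most `dim_F V`. -/
theorem rank_periodSpace_le
    {F B G V : Type u} [Field F] [CommRing B] [IsDomain B] [Algebra F B] [Group G]
    [AddCommGroup V] [Module F V] [FiniteDimensional F V]
    (ρ : G →* (B ≃ₐ[F] B)) (σ : Representation F G V)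
    (hfrac : ∀ a b : B, b ≠ 0 → (∀ g : G, ρ g a * b = ρ g b * a) →
      ∃ c : B, (∀ g : G, ρ g c = c) ∧ a = c * b)
    (hreg : ∀ b : B, b ≠ 0 → (∀ g : G, ∃ c : F, ρ g b = c • b) → IsUnit b) :
    Module.rank (fixedSubring ρ) (periodSpace ρ σ) ≤ Module.rank F V :=
  rank_periodSpace_le_general ρ σ hfrac
end

section
/- Let F be a field, G a group, and B a G-regular F-algebra (B a nonzero integral domain with G acting by F-algebra automorphisms, (Frac B)^G = B^G, and every nonzero b ∈ B whose F-span is G-stable is a unit of B); write E = B^G. Let V be a finite-dimensional F-vector space with an F-linear G-action, and let G act diagonally on B ⊗_F V. Then the natural B-linear map B ⊗_E (B ⊗_F V)^G → B ⊗_F V, sending b ⊗ x to b·x, is injective. -/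
open TensorProduct

universe u

/-- The natural map `B ⊗_E D_B(V) → B ⊗_F V`, sending `b ⊗ x` to `b • x`
(where `B ⊗[F] V` is a `B`-module through the left factor). -/
noncomputable def multMap {F B G V : Type u} [Field F] [CommRing B] [Algebra F B] [Group G]
    [AddCommGroup V] [Module F V]
    (ρ : G →* (B ≃ₐ[F] B)) (σ : Representation F G V) :
    B ⊗[fixedSubring ρ] (periodSpace ρ σ) →ₗ[fixedSubring ρ] B ⊗[F] V :=
  TensorProduct.lift <| LinearMap.mk₂ (fixedSubring ρ)
    (fun b (x : periodSpace ρ σ) => b • (x : B ⊗[F] V))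
    (fun b₁ b₂ x => add_smul b₁ b₂ (x : B ⊗[F] V))
    (fun c b x => smul_assoc c b (x : B ⊗[F] V))
    (fun b x y => by simp [smul_add])
    (fun c b x => by
      change b • ((c : B) • (x : B ⊗[F] V)) = (c : B) • (b • (x : B ⊗[F] V))
      rw [smul_comm])

/-!
Let `E = B^G`. It suffices that `E`-linearly independent `v i ∈ (B ⊗_F V)^G` stay `B`-linearly
independent in `B ⊗_F V`. Take a relation `∑ lᵢ vᵢ = 0` of minimal support and some `i₀` in it.
For each `g`, the relation `g(l_{i₀}) · l - l_{i₀} · g(l)` has smaller support, hence vanishes,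
so every ratio `lᵢ / l_{i₀}` is `G`-invariant in `Frac B`; by `(Frac B)^G = E` it lies in `E`,
and dividing the relation by `l_{i₀}` gives an `E`-linear relation among the `vᵢ`.
The same invariance property with numerator `1` shows that `E` is a field.
-/

section FixedSubring

variable {F B G : Type*} [Field F] [CommRing B] [Algebra F B] [Group G]
  (ρ : G →* (B ≃ₐ[F] B))

theorem fixedSubring_isField [Nontrivial B]
    (hfrac : ∀ a b : B, b ≠ 0 → (∀ g : G, ρ g a * b = ρ g b * a) →
      ∃ c : B, (∀ g : G, ρ g c = c) ∧ a = c * b) :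
    IsField (fixedSubring ρ) where
  exists_pair_ne := exists_pair_ne _
  mul_comm := mul_comm
  mul_inv_cancel {a} ha := by
    have ha' : (a : B) ≠ 0 := fun h => ha (Subtype.ext h)
    obtain ⟨c, hc, hca⟩ := hfrac 1 a ha' fun g => by rw [map_one, one_mul, mul_one, a.2 g]
    exact ⟨⟨c, hc⟩, Subtype.ext (by rw [mul_comm]; exact hca.symm)⟩

end FixedSubring

namespace Finsupp

variable {ι R : Type*} [CommRing R]

theorem support_smul_sub_smul_mapRange_subset [DecidableEq ι] {φ : R → R} (hφ : φ 0 = 0)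
    (l : ι →₀ R) (i : ι) : (φ (l i) • l - l i • l.mapRange φ hφ).support ⊆ l.support.erase i := by
  intro j hj
  rw [mem_support_iff, sub_apply, smul_apply, smul_apply, mapRange_apply, smul_eq_mul,
    smul_eq_mul] at hj
  refine Finset.mem_erase.mpr ⟨fun hji => hj ?_, mem_support_iff.mpr fun hlj => hj ?_⟩
  · rw [hji, mul_comm, sub_self]
  · rw [hlj, hφ, mul_zero, mul_zero, sub_self]

end Finsupp

section PeriodSpace

variable {F B G V : Type*} [Field F] [CommRing B] [Algebra F B] [Group G]
  [AddCommGroup V] [Module F V] {ρ : G →* (B ≃ₐ[F] B)} {σ : Representation F G V}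
  {ι : Type*}

theorem diagAction_linearCombination (v : ι → periodSpace ρ σ) (g : G) (l : ι →₀ B) :
    diagAction ρ σ g (Finsupp.linearCombination B (fun i => (v i : B ⊗[F] V)) l) =
      Finsupp.linearCombination B (fun i => (v i : B ⊗[F] V))
        (l.mapRange (ρ g) (map_zero _)) := by
  induction l using Finsupp.induction_linear with
  | zero => simp
  | add l₁ l₂ h₁ h₂ => rw [map_add, map_add, h₁, h₂, Finsupp.mapRange_add (map_add _), map_add]
  | single i b =>
    rw [Finsupp.mapRange_single, Finsupp.linearCombination_single,
      Finsupp.linearCombination_single, diagAction_smul, (v i).2 g]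

theorem eq_zero_of_linearCombination_eq_zero_of_proportional [IsDomain B]
    {v : ι → periodSpace ρ σ} (hv : LinearIndependent (fixedSubring ρ) v) {l : ι →₀ B}
    (hl : Finsupp.linearCombination B (fun i => (v i : B ⊗[F] V)) l = 0)
    {c : ι → fixedSubring ρ} {a : B} (hc : ∀ i, l i = c i * a) : l = 0 := by
  have hsum : a • ((∑ i ∈ l.support, c i • v i : periodSpace ρ σ) : B ⊗[F] V) = 0 := by
    rw [← hl, Finsupp.linearCombination_apply, Finsupp.sum, Submodule.coe_sum, Finset.smul_sum]
    refine Finset.sum_congr rfl fun i _ => ?_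
    rw [Submodule.coe_smul, hc i, mul_comm, ← smul_smul]
    rfl
  rcases eq_or_ne a 0 with rfl | ha
  · ext i
    rw [hc i, mul_zero, Finsupp.coe_zero, Pi.zero_apply]
  have hc0 : ∀ i ∈ l.support, c i = 0 :=
    (linearIndependent_iff' (R := fixedSubring ρ) (M := periodSpace ρ σ) (v := v)).mp hv
      l.support c (Subtype.ext ((smul_eq_zero_iff_right ha).mp hsum))
  ext i
  by_cases hi : i ∈ l.support
  · rw [hc i, hc0 i hi, ZeroMemClass.coe_zero, zero_mul, Finsupp.coe_zero, Pi.zero_apply]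
  · exact Finsupp.notMem_support_iff.mp hi

theorem LinearIndependent.coe_periodSpace [IsDomain B]
    (hfrac : ∀ a b : B, b ≠ 0 → (∀ g : G, ρ g a * b = ρ g b * a) →
      ∃ c : B, (∀ g : G, ρ g c = c) ∧ a = c * b)
    {v : ι → periodSpace ρ σ} (hv : LinearIndependent (fixedSubring ρ) v) :
    LinearIndependent B (fun i => (v i : B ⊗[F] V)) := by
  classical
  rw [linearIndependent_iff]
  intro l hl
  induction h : l.support.card using Nat.strong_induction_on generalizing l with
  | _ n ih =>
  obtain hl0 | ⟨i₀, hi₀⟩ := l.support.eq_empty_or_nonempty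
  · exact Finsupp.support_eq_empty.mp hl0
  have hcomm : ∀ g i, ρ g (l i) * l i₀ = ρ g (l i₀) * l i := by
    intro g i
    have hsupp := l.support_smul_sub_smul_mapRange_subset (map_zero (ρ g)) i₀
    have hrel : Finsupp.linearCombination B (fun i => (v i : B ⊗[F] V))
        (ρ g (l i₀) • l - l i₀ • l.mapRange (ρ g) (map_zero _)) = 0 := by
      rw [map_sub, map_smul, map_smul, hl, ← diagAction_linearCombination, hl, map_zero,
        smul_zero, smul_zero, sub_zero]
    have htwist := ih _ ((Finset.card_le_card hsupp).trans_lt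
      (h ▸ Finset.card_erase_lt_of_mem hi₀)) _ hrel rfl
    have hi := DFunLike.congr_fun htwist i
    simp only [Finsupp.sub_apply, Finsupp.smul_apply, Finsupp.mapRange_apply, smul_eq_mul,
      Finsupp.coe_zero, Pi.zero_apply, sub_eq_zero] at hi
    rw [mul_comm, hi, mul_comm]
  choose c hc hlc using fun i =>
    hfrac (l i) (l i₀) (Finsupp.mem_support_iff.mp hi₀) (hcomm · i)
  exact eq_zero_of_linearCombination_eq_zero_of_proportional hv hl
    (c := fun i => ⟨c i, hc i⟩) hlc

end PeriodSpace

theorem multMap_baseChange_repr_symm {F B G V ι : Type u} [Field F] [CommRing B] [Algebra F B]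
    [Group G] [AddCommGroup V] [Module F V] {ρ : G →* (B ≃ₐ[F] B)} {σ : Representation F G V}
    (bD : Module.Basis ι (fixedSubring ρ) (periodSpace ρ σ)) (l : ι →₀ B) :
    multMap ρ σ ((bD.baseChange B).repr.symm l) =
      Finsupp.linearCombination B (fun i => (bD i : B ⊗[F] V)) l := by
  induction l using Finsupp.induction_linear with
  | zero => simp
  | add l₁ l₂ h₁ h₂ => rw [map_add, map_add, h₁, h₂, map_add]
  | single i b =>
    rw [Module.Basis.repr_symm_single, Module.Basis.baseChange_apply, TensorProduct.smul_tmul',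
      smul_eq_mul, mul_one, Finsupp.linearCombination_single]
    rfl

theorem multMap_injective_general
    {F B G V : Type u} [Field F] [CommRing B] [IsDomain B] [Algebra F B] [Group G]
    [AddCommGroup V] [Module F V]
    (ρ : G →* (B ≃ₐ[F] B)) (σ : Representation F G V)
    (hfrac : ∀ a b : B, b ≠ 0 → (∀ g : G, ρ g a * b = ρ g b * a) →
      ∃ c : B, (∀ g : G, ρ g c = c) ∧ a = c * b) :
    Function.Injective (multMap ρ σ) := by
  let _ : Field (fixedSubring ρ) := (fixedSubring_isField ρ hfrac).toField
  let bD := Module.Basis.ofVectorSpace (fixedSubring ρ) (periodSpace ρ σ)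
  have hmult : ⇑(multMap ρ σ) =
      Finsupp.linearCombination B (fun i => (bD i : B ⊗[F] V)) ∘ (bD.baseChange B).repr := by
    funext z
    rw [Function.comp_apply, ← multMap_baseChange_repr_symm, LinearEquiv.symm_apply_apply]
  rw [hmult]
  exact (linearIndependent_iff_injective_finsuppLinearCombination.mp
    (bD.linearIndependent.coe_periodSpace hfrac)).comp (LinearEquiv.injective _)

/-- Let `B` be a `G`-regular `F`-algebra (an integral domain on which `G` acts by `F`-algebra
automorphisms, such that `(Frac B)^G = B^G` and every nonzero `b ∈ B` whose `F`-span is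
`G`-stable is a unit), with fixed field `E = B^G`.  For any finite-dimensional `F`-linear
representation `V` of `G`, the natural map
`B ⊗_E (B ⊗_F V)^G → B ⊗_F V`, `b ⊗ x ↦ b • x`, is injective. -/
theorem multMap_injective
    {F B G V : Type u} [Field F] [CommRing B] [IsDomain B] [Algebra F B] [Group G]
    [AddCommGroup V] [Module F V] [FiniteDimensional F V]
    (ρ : G →* (B ≃ₐ[F] B)) (σ : Representation F G V)
    (hfrac : ∀ a b : B, b ≠ 0 → (∀ g : G, ρ g a * b = ρ g b * a) →
      ∃ c : B, (∀ g : G, ρ g c = c) ∧ a = c * b)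
    (hreg : ∀ b : B, b ≠ 0 → (∀ g : G, ∃ c : F, ρ g b = c • b) → IsUnit b) :
    Function.Injective (multMap ρ σ) :=
  multMap_injective_general ρ σ hfrac
end
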